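/- Let m ≥ 1 be an integer and r0 a real number with 0 < r0 < m. Then the function r ↦ J_{m+1/2}(r)/r^{1/2} is monotone increasing on the interval (0, r0], where J_α is the Bessel function of the first kind defined by its power series; consequently its supremum over (0, r0] equals J_{m+1/2}(r0)/r0^{1/2}. -/

import Mathlib

open Real

/-- Bessel function of the first kind, defined by its power series. -/
noncomputable def besselJ (α : ℝ) (x : ℝ) : ℝ :=
  ∑' k : ℕ,
    ((-1 : ℝ) ^ k / ((Nat.factorial k : ℝ) * Real.Gamma ((k : ℝ) + α + 1))) *
      (x / 2) ^ (2 * (k : ℝ) + α)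

/-!
Write `F = J_{m+1/2}(x) / √x = ∑ c_k x^(2k+m)`. The series satisfies
`(x² F')' = (m (m + 1) - x²) F` with `F 0 = 0`, and `x² F'` is positive just to the right of `0`.
While `x² F' > 0` the function `F` increases from `F 0 = 0`, so `F > 0`; while moreover
`x² < m (m + 1)`, this makes `x² F'` increase from `0`. Hence `x² F'` has no first zero in
`(0, √(m (m + 1)))`, which contains `(0, r0]`, and `F` is increasing there.
-/

open Set Filter Topology
open scoped Nat

section PowSeriesStepTwo

variable {a : ℕ → ℝ}

lemma summable_abs_natCast_two_mul_add_mul (ha : ∀ R, Summable fun k => |a k| * R ^ k) (j : ℕ)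
    (R : ℝ) : Summable fun k => |((2 * k + j : ℕ) : ℝ) * a k| * R ^ k := by
  refine ((ha (2 * |R|)).mul_left ((2 : ℝ) + j)).of_norm_bounded fun k => ?_
  have hk : ((2 * k + j : ℕ) : ℝ) ≤ (2 + j) * 2 ^ k := by
    have : (k : ℝ) + 1 ≤ 2 ^ k := by exact_mod_cast Nat.lt_two_pow_self
    push_cast
    nlinarith
  rw [Real.norm_eq_abs, abs_mul, abs_abs, abs_pow, abs_mul, Nat.abs_cast, mul_pow]
  calc ((2 * k + j : ℕ) : ℝ) * |a k| * |R| ^ k ≤ (2 + j) * 2 ^ k * |a k| * |R| ^ k := by gcongr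
    _ = (2 + j) * (|a k| * (2 ^ k * |R| ^ k)) := by ring

lemma summable_mul_pow_two_mul_add (ha : ∀ R, Summable fun k => |a k| * R ^ k) (j : ℕ) (x : ℝ) :
    Summable fun k => a k * x ^ (2 * k + j) :=
  ((ha (x ^ 2)).mul_left (|x| ^ j)).of_norm_bounded fun k => le_of_eq <| by
    rw [norm_mul, norm_pow, Real.norm_eq_abs, Real.norm_eq_abs, pow_add, pow_mul, sq_abs]
    ring

theorem hasDerivAt_tsum_mul_pow_two_mul_add (ha : ∀ R, Summable fun k => |a k| * R ^ k) (j : ℕ)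
    (x : ℝ) :
    HasDerivAt (fun y => ∑' k, a k * y ^ (2 * k + j))
      (∑' k, a k * (((2 * k + j : ℕ) : ℝ) * x ^ (2 * k + j - 1))) x := by
  set R := |x| + 1
  have hR : 1 ≤ R := le_add_of_nonneg_left (abs_nonneg x)
  refine hasDerivAt_tsum_of_isPreconnected
    ((summable_abs_natCast_two_mul_add_mul ha j (R ^ 2)).mul_left (R ^ j)) isOpen_Ioo
    (convex_Ioo (-R) R).isPreconnected (fun k y _ => (hasDerivAt_pow _ y).const_mul (a k))
    (fun k y hy => ?_) (y₀ := x) ?_ (summable_mul_pow_two_mul_add ha j x) ?_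
  · have hy : |y| ≤ R := abs_le.2 ⟨hy.1.le, hy.2.le⟩
    calc ‖a k * (((2 * k + j : ℕ) : ℝ) * y ^ (2 * k + j - 1))‖
        = |((2 * k + j : ℕ) : ℝ) * a k| * |y| ^ (2 * k + j - 1) := by
          rw [Real.norm_eq_abs, abs_mul, abs_mul, abs_mul, abs_pow]; ring
      _ ≤ |((2 * k + j : ℕ) : ℝ) * a k| * R ^ (2 * k + j) := by
          gcongr
          exact (pow_le_pow_left₀ (abs_nonneg y) hy _).trans (pow_le_pow_right₀ hR (Nat.sub_le _ _))
      _ = R ^ j * (|((2 * k + j : ℕ) : ℝ) * a k| * (R ^ 2) ^ k) := by rw [pow_add, pow_mul]; ring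
  all_goals exact ⟨by linarith [neg_abs_le x], by linarith [le_abs_self x]⟩

end PowSeriesStepTwo

section DerivCoupling

variable {f f' w w' : ℝ → ℝ} {b : ℝ}

lemma strictMonoOn_Icc_of_hasDerivAt_pos {a : ℝ} (hf : ∀ x, HasDerivAt f (f' x) x)
    (hpos : ∀ x ∈ Ioo a b, 0 < f' x) : StrictMonoOn f (Icc a b) :=
  strictMonoOn_of_hasDerivWithinAt_pos (convex_Icc a b)
    (fun x _ => (hf x).continuousAt.continuousWithinAt) (fun x _ => (hf x).hasDerivWithinAt)
    (fun x hx => hpos x (by rwa [interior_Icc] at hx))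

lemma pos_on_Ioo_of_deriv_coupling (hf : ∀ x, HasDerivAt f (f' x) x)
    (hw : ∀ x, HasDerivAt w (w' x) x) (hf0 : f 0 = 0) (hw0 : w 0 = 0)
    (hf' : ∀ x ∈ Ioo 0 b, 0 < w x → 0 < f' x) (hw' : ∀ x ∈ Ioo 0 b, 0 < f x → 0 < w' x)
    (hw_near : ∀ᶠ x in 𝓝[>] 0, 0 < w x) : ∀ x ∈ Ioo 0 b, 0 < w x := by
  have propagate : ∀ r ∈ Ioo 0 b, (∀ x ∈ Ioo 0 r, 0 < w x) → 0 < w r := by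
    intro r hr hpos
    have hsub : Ioo 0 r ⊆ Ioo 0 b := Ioo_subset_Ioo_right hr.2.le
    have hf_mono := strictMonoOn_Icc_of_hasDerivAt_pos hf fun x hx => hf' x (hsub hx) (hpos x hx)
    have hw_mono := strictMonoOn_Icc_of_hasDerivAt_pos hw fun x hx => hw' x (hsub hx) <| by
      simpa [hf0] using hf_mono (left_mem_Icc.2 hr.1.le) (Ioo_subset_Icc_self hx) hx.1
    simpa [hw0] using hw_mono (left_mem_Icc.2 hr.1.le) (right_mem_Icc.2 hr.1.le) hr.1
  intro x₀ hx₀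
  by_contra! hwx₀
  obtain ⟨δ, hδ, hδw⟩ := mem_nhdsGT_iff_exists_Ioo_subset.1 hw_near
  have hδx₀ : δ ≤ x₀ := not_lt.1 fun h => (hδw ⟨hx₀.1, h⟩ : 0 < w x₀).not_ge hwx₀
  -- `sInf B` is the first zero of `w` in `(0, x₀]`
  set B := Icc (δ / 2) x₀ ∩ {x | w x ≤ 0}
  have hB : IsCompact B := isCompact_Icc.inter_right <|
    isClosed_le (continuous_iff_continuousAt.2 fun x => (hw x).continuousAt) continuous_const
  have hr : sInf B ∈ B := hB.sInf_mem ⟨x₀, ⟨by linarith [mem_Ioi.1 hδ], le_rfl⟩, hwx₀⟩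
  have hr0 : 0 < sInf B := by linarith [hr.1.1, mem_Ioi.1 hδ]
  refine (propagate (sInf B) ⟨hr0, hr.1.2.trans_lt hx₀.2⟩ fun x hx => ?_).not_ge hr.2
  by_contra! hwx
  rcases lt_or_ge x δ with hxδ | hxδ
  · exact (hδw ⟨hx.1, hxδ⟩ : 0 < w x).not_ge hwx
  · have hxB : x ∈ B := ⟨⟨by linarith [mem_Ioi.1 hδ], hx.2.le.trans hr.1.2⟩, hwx⟩
    exact (csInf_le hB.bddBelow hxB).not_gt hx.2

theorem strictMonoOn_Icc_of_deriv_coupling (hf : ∀ x, HasDerivAt f (f' x) x)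
    (hw : ∀ x, HasDerivAt w (w' x) x) (hf0 : f 0 = 0) (hw0 : w 0 = 0)
    (hf' : ∀ x ∈ Ioo 0 b, 0 < w x → 0 < f' x) (hw' : ∀ x ∈ Ioo 0 b, 0 < f x → 0 < w' x)
    (hw_near : ∀ᶠ x in 𝓝[>] 0, 0 < w x) : StrictMonoOn f (Icc 0 b) :=
  strictMonoOn_Icc_of_hasDerivAt_pos hf fun x hx =>
    hf' x hx (pos_on_Ioo_of_deriv_coupling hf hw hf0 hw0 hf' hw' hw_near x hx)

end DerivCoupling

namespace BesselJHalfInt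

noncomputable def coeff (m k : ℕ) : ℝ :=
  (-1) ^ k / ((k ! : ℝ) * Gamma (k + ((m : ℝ) + 1 / 2) + 1)) / 2 ^ (2 * (k : ℝ) + ((m : ℝ) + 1 / 2))

lemma besselJ_div_sqrt_eq_tsum (m : ℕ) {x : ℝ} (hx : 0 < x) :
    besselJ ((m : ℝ) + 1 / 2) x / x ^ ((1 : ℝ) / 2) = ∑' k, coeff m k * x ^ (2 * k + m) := by
  rw [besselJ, ← tsum_div_const]
  refine tsum_congr fun k => ?_
  have hexp : 2 * (k : ℝ) + ((m : ℝ) + 1 / 2) = ((2 * k + m : ℕ) : ℝ) + 1 / 2 := by push_cast; ring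
  rw [coeff, div_rpow hx.le zero_le_two, hexp, rpow_add hx, rpow_natCast]
  field_simp

lemma coeff_succ (m k : ℕ) : 4 * (k + 1) * (k + m + 3 / 2) * coeff m (k + 1) = -coeff m k := by
  have hΓ : Gamma ((k + 1 : ℕ) + ((m : ℝ) + 1 / 2) + 1) =
      (k + m + 3 / 2) * Gamma (k + ((m : ℝ) + 1 / 2) + 1) := by
    rw [show ((k + 1 : ℕ) : ℝ) + ((m : ℝ) + 1 / 2) + 1 = k + ((m : ℝ) + 1 / 2) + 1 + 1 by
      push_cast; ring, Gamma_add_one (by positivity)]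
    ring
  have h2 : (2 : ℝ) ^ (2 * ((k + 1 : ℕ) : ℝ) + ((m : ℝ) + 1 / 2)) =
      4 * 2 ^ (2 * (k : ℝ) + ((m : ℝ) + 1 / 2)) := by
    rw [show 2 * ((k + 1 : ℕ) : ℝ) + ((m : ℝ) + 1 / 2) = 2 + (2 * (k : ℝ) + ((m : ℝ) + 1 / 2)) by
      push_cast; ring, rpow_add two_pos]
    norm_num
  rw [coeff, coeff, hΓ, h2, Nat.factorial_succ, pow_succ]
  push_cast
  field_simp

lemma coeff_zero_pos (m : ℕ) : 0 < coeff m 0 := by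
  rw [coeff]
  have : 0 < Gamma ((0 : ℕ) + ((m : ℝ) + 1 / 2) + 1) := Gamma_pos_of_pos (by positivity)
  positivity

lemma abs_coeff_le (m k : ℕ) : |coeff m k| ≤ coeff m 0 / k ! := by
  induction k with
  | zero => simp [abs_of_pos (coeff_zero_pos m)]
  | succ k ih =>
    have hk : (k + 1 : ℝ) ≤ 4 * (k + 1) * (k + m + 3 / 2) := by nlinarith
    have hrec := congrArg abs (coeff_succ m k)
    rw [abs_neg, abs_mul, abs_of_pos (by positivity : (0 : ℝ) < 4 * (k + 1) * (k + m + 3 / 2))]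
      at hrec
    calc |coeff m (k + 1)| ≤ |coeff m k| / (k + 1) := by
          rw [le_div_iff₀ (by positivity)]
          nlinarith [abs_nonneg (coeff m (k + 1))]
      _ ≤ coeff m 0 / k ! / (k + 1) := by gcongr
      _ = coeff m 0 / (k + 1)! := by rw [Nat.factorial_succ, Nat.cast_mul, div_div]; push_cast; ring

lemma summable_abs_coeff_mul_pow (m : ℕ) (R : ℝ) : Summable fun k => |coeff m k| * R ^ k :=
  ((summable_pow_div_factorial |R|).mul_left (coeff m 0)).of_norm_bounded fun k => by
    rw [norm_mul, norm_pow, Real.norm_eq_abs, Real.norm_eq_abs, abs_abs]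
    calc |coeff m k| * |R| ^ k ≤ coeff m 0 / k ! * |R| ^ k := by gcongr; exact abs_coeff_le m k
      _ = coeff m 0 * (|R| ^ k / k !) := by ring

noncomputable def series (m : ℕ) (x : ℝ) : ℝ := ∑' k, coeff m k * x ^ (2 * k + m)

/-- `x² · (series m)'`: `series m` solves `(x² y')' = (m (m + 1) - x²) y`, the self-adjoint form
of the spherical Bessel equation. -/
noncomputable def quasiDeriv (m : ℕ) (x : ℝ) : ℝ :=
  ∑' k, ((2 * k + m : ℕ) : ℝ) * coeff m k * x ^ (2 * k + (m + 1))

lemma summable_abs_natCast_mul_coeff_mul_pow (m : ℕ) (R : ℝ) :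
    Summable fun k => |((2 * k + m : ℕ) : ℝ) * coeff m k| * R ^ k :=
  summable_abs_natCast_two_mul_add_mul (summable_abs_coeff_mul_pow m) m R

lemma hasDerivAt_series (m : ℕ) (x : ℝ) :
    HasDerivAt (series m) (∑' k, coeff m k * (((2 * k + m : ℕ) : ℝ) * x ^ (2 * k + m - 1))) x :=
  hasDerivAt_tsum_mul_pow_two_mul_add (summable_abs_coeff_mul_pow m) m x

lemma sq_mul_deriv_series (m : ℕ) (x : ℝ) : x ^ 2 * deriv (series m) x = quasiDeriv m x := by
  rw [(hasDerivAt_series m x).deriv, quasiDeriv, ← tsum_mul_left]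
  refine tsum_congr fun k => ?_
  rcases Nat.eq_zero_or_pos (2 * k + m) with h | h
  · simp [h]
  · rw [show 2 * k + (m + 1) = 2 * k + m - 1 + 2 by omega, pow_add]
    ring

lemma tsum_deriv_quasiDeriv_eq (m : ℕ) (x : ℝ) :
    ∑' k, ((2 * k + m : ℕ) : ℝ) * coeff m k *
        (((2 * k + (m + 1) : ℕ) : ℝ) * x ^ (2 * k + (m + 1) - 1)) =
      (m * (m + 1) - x ^ 2) * series m x := by
  have hf : HasSum (fun k => coeff m k * x ^ (2 * k + m)) (series m x) :=
    (summable_mul_pow_two_mul_add (summable_abs_coeff_mul_pow m) m x).hasSum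
  -- the `k = 0` term vanishes, and `coeff_succ` turns term `k + 1` into `-x²` times term `k`
  have hshift : HasSum (fun k => 4 * k * (k + m + 1 / 2) * (coeff m k * x ^ (2 * k + m)))
      (-x ^ 2 * series m x) := by
    refine (hasSum_nat_add_iff' 1).1 ?_
    simp only [Finset.sum_range_one, Nat.cast_zero, mul_zero, zero_mul, sub_zero]
    refine (hf.mul_left (-x ^ 2)).congr_fun fun k => ?_
    rw [show 2 * (k + 1) + m = 2 * k + m + 2 by ring, pow_add]
    push_cast
    linear_combination x ^ (2 * k + m) * x ^ 2 * coeff_succ m k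
  calc ∑' k, ((2 * k + m : ℕ) : ℝ) * coeff m k *
        (((2 * k + (m + 1) : ℕ) : ℝ) * x ^ (2 * k + (m + 1) - 1))
      = ∑' k, (m * (m + 1) * (coeff m k * x ^ (2 * k + m)) +
          4 * k * (k + m + 1 / 2) * (coeff m k * x ^ (2 * k + m))) := by
        refine tsum_congr fun k => ?_
        rw [show 2 * k + (m + 1) - 1 = 2 * k + m by omega]
        push_cast
        ring
    _ = m * (m + 1) * series m x + -x ^ 2 * series m x :=
        ((hf.mul_left ((m : ℝ) * (m + 1))).add hshift).tsum_eq
    _ = (m * (m + 1) - x ^ 2) * series m x := by ring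

lemma hasDerivAt_quasiDeriv (m : ℕ) (x : ℝ) :
    HasDerivAt (quasiDeriv m) ((m * (m + 1) - x ^ 2) * series m x) x := by
  rw [← tsum_deriv_quasiDeriv_eq]
  exact hasDerivAt_tsum_mul_pow_two_mul_add (summable_abs_natCast_mul_coeff_mul_pow m) (m + 1) x

lemma series_zero {m : ℕ} (hm : 0 < m) : series m 0 = 0 := by
  simp [series, hm.ne']

lemma quasiDeriv_zero (m : ℕ) : quasiDeriv m 0 = 0 := by
  simp [quasiDeriv]

lemma eventually_quasiDeriv_pos {m : ℕ} (hm : 0 < m) : ∀ᶠ x in 𝓝[>] 0, 0 < quasiDeriv m x := by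
  set P := fun y : ℝ => ∑' k, ((2 * k + m : ℕ) : ℝ) * coeff m k * y ^ (2 * k + 0)
  have hP : ContinuousAt P 0 :=
    (hasDerivAt_tsum_mul_pow_two_mul_add (summable_abs_natCast_mul_coeff_mul_pow m) 0 0).continuousAt
  have hP0 : 0 < P 0 := by
    rw [show P 0 = m * coeff m 0 from (tsum_eq_single 0 fun k hk => by simp [hk]).trans (by simp)]
    exact mul_pos (Nat.cast_pos.2 hm) (coeff_zero_pos m)
  filter_upwards [self_mem_nhdsWithin, nhdsWithin_le_nhds (hP.eventually (lt_mem_nhds hP0))]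
    with x hx hPx
  have : quasiDeriv m x = x ^ (m + 1) * P x := by
    rw [quasiDeriv, ← tsum_mul_left]
    exact tsum_congr fun k => by ring
  rw [this]
  exact mul_pos (pow_pos hx _) hPx

theorem strictMonoOn_series {m : ℕ} (hm : 0 < m) {b : ℝ} (hb : b ^ 2 ≤ m * (m + 1)) :
    StrictMonoOn (series m) (Icc 0 b) :=
  strictMonoOn_Icc_of_deriv_coupling (fun x => (hasDerivAt_series m x).differentiableAt.hasDerivAt)
    (hasDerivAt_quasiDeriv m) (series_zero hm) (quasiDeriv_zero m)
    (fun x _ hw => pos_of_mul_pos_right (by rwa [sq_mul_deriv_series]) (sq_nonneg x))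
    (fun x hx hf => mul_pos (by nlinarith [hx.1, hx.2]) hf) (eventually_quasiDeriv_pos hm)

end BesselJHalfInt

open BesselJHalfInt in
theorem besselJ_div_sqrt_monotoneOn_general (m : ℕ) (r0 : ℝ) (hr0 : 0 < r0)
    (hr0m : r0 < (m : ℝ)) :
    MonotoneOn (fun s : ℝ => besselJ ((m : ℝ) + 1 / 2) s / s ^ ((1 : ℝ) / 2))
      (Set.Ioc 0 r0) ∧
    sSup ((fun s : ℝ => besselJ ((m : ℝ) + 1 / 2) s / s ^ ((1 : ℝ) / 2)) '' Set.Ioc 0 r0) =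
      besselJ ((m : ℝ) + 1 / 2) r0 / r0 ^ ((1 : ℝ) / 2) := by
  have hm : 0 < m := Nat.cast_pos.1 (hr0.trans hr0m)
  have hmono : MonotoneOn (fun s : ℝ => besselJ ((m : ℝ) + 1 / 2) s / s ^ ((1 : ℝ) / 2))
      (Ioc 0 r0) :=
    ((strictMonoOn_series hm (b := r0) (by nlinarith)).monotoneOn.mono Ioc_subset_Icc_self).congr
      fun s hs => (besselJ_div_sqrt_eq_tsum m hs.1).symm
  exact ⟨hmono, (hmono.map_isGreatest (isGreatest_Ioc hr0)).csSup_eq⟩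

theorem besselJ_div_sqrt_monotoneOn (m : ℕ) (hm : 1 ≤ m) (r0 : ℝ) (hr0 : 0 < r0)
    (hr0m : r0 < (m : ℝ)) :
    MonotoneOn (fun s : ℝ => besselJ ((m : ℝ) + 1 / 2) s / s ^ ((1 : ℝ) / 2))
      (Set.Ioc 0 r0) ∧
    sSup ((fun s : ℝ => besselJ ((m : ℝ) + 1 / 2) s / s ^ ((1 : ℝ) / 2)) '' Set.Ioc 0 r0) =
      besselJ ((m : ℝ) + 1 / 2) r0 / r0 ^ ((1 : ℝ) / 2) :=
  besselJ_div_sqrt_monotoneOn_general m r0 hr0 hr0m
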